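/- arXiv:0711.0035 — 5 statements merged into one kernel-verified Lean document; each statement's English description precedes it below -/
import Mathlib

section
/- Let (M, 𝒜, μ) be a σ-finite measure space, S a dense subspace of a separable Hilbert space H, T a bounded operator on H, and Λ : M → B(H) weakly measurable with each Λ(q) positive. If ⟨ψ, Tψ⟩ = ∫ ⟨ψ, Λ(q)ψ⟩ dμ(q) holds for all ψ ∈ S, then it holds for all ψ ∈ H. -/
/-!
Put `Q ψ = re ⟪ψ, T ψ⟫` and `I ψ = ∫ re ⟪ψ, Λ q ψ⟫ dμ`; both satisfy the parallelogram law.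
Fatou's lemma along points of `S` tending to `ψ` gives `I ψ ≤ Q ψ`, hence integrability, so
`D = Q - I` is a nonnegative functional obeying the parallelogram law and vanishing on `S`.
For `s ∈ S` the parallelogram law yields `D ψ ≤ 2 D s + 2 D (ψ - s) = 2 D (ψ - s) ≤ 2 Q (ψ - s)`,
which tends to `0` as `s → ψ`. Finally `⟪ψ, T ψ⟫` is real because the positive cone of `ℂ`
is closed.
-/

open scoped ComplexOrder ENNReal InnerProductSpace
open MeasureTheory Filter Topology

theorem Complex.eq_re_of_nonneg {z : ℂ} (hz : 0 ≤ z) : z = z.re :=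
  Complex.eq_re_of_ofReal_le (by rwa [Complex.ofReal_zero])

theorem inner_map_add_add_inner_map_sub {𝕜 E F : Type*} [RCLike 𝕜] [NormedAddCommGroup E]
    [InnerProductSpace 𝕜 E] [FunLike F E E] [AddMonoidHomClass F E E] (P : F) (a b : E) :
    ⟪a + b, P (a + b)⟫_𝕜 + ⟪a - b, P (a - b)⟫_𝕜 = 2 * ⟪a, P a⟫_𝕜 + 2 * ⟪b, P b⟫_𝕜 := by
  simp only [map_add, map_sub, inner_add_left, inner_add_right, inner_sub_left, inner_sub_right]
  ring

theorem eq_zero_of_parallelogram_of_dense {E : Type*} [AddCommGroup E] [TopologicalSpace E]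
    [ContinuousSub E] {D : E → ℝ} (hD_nonneg : ∀ x, 0 ≤ D x)
    (hD_par : ∀ a b, D (a + b) + D (a - b) = 2 * D a + 2 * D b)
    (hD_zero : Tendsto D (𝓝 0) (𝓝 0)) {S : Set E} (hS : Dense S) (hDS : ∀ s ∈ S, D s = 0)
    (x : E) : D x = 0 := by
  have hbound : ∀ s ∈ S, D x ≤ 2 * D (x - s) := fun s hs => by
    have := hD_par s (x - s)
    rw [add_sub_cancel, hDS s hs] at this
    linarith [hD_nonneg (s - (x - s))]
  have hsub : Tendsto (fun s => x - s) (𝓝 x) (𝓝 0) := by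
    simpa using (tendsto_const_nhds (x := x)).sub (tendsto_id (x := 𝓝 x))
  have hlim : Tendsto (fun s => 2 * D (x - s)) (𝓝[S] x) (𝓝 (2 * 0)) :=
    ((hD_zero.comp hsub).const_mul 2).mono_left nhdsWithin_le_nhds
  have := mem_closure_iff_nhdsWithin_neBot.1 (hS x)
  refine le_antisymm ?_ (hD_nonneg x)
  simpa using ge_of_tendsto hlim (eventually_nhdsWithin_of_forall hbound)

theorem lintegral_le_of_dense {E M : Type*} [TopologicalSpace E]
    [FirstCountableTopology E] [MeasurableSpace M] {μ : Measure M} {F : E → M → ℝ≥0∞}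
    (hF_meas : ∀ x, Measurable (F x)) (hF_cont : ∀ q, Continuous fun x => F x q)
    {G : E → ℝ≥0∞} (hG : Continuous G) {S : Set E} (hS : Dense S)
    (hSG : ∀ s ∈ S, ∫⁻ q, F s q ∂μ ≤ G s) (x : E) : ∫⁻ q, F x q ∂μ ≤ G x := by
  have := mem_closure_iff_nhdsWithin_neBot.1 (hS x)
  calc ∫⁻ q, F x q ∂μ = ∫⁻ q, liminf (fun s => F s q) (𝓝[S] x) ∂μ :=
        lintegral_congr fun q =>
          (tendsto_nhdsWithin_of_tendsto_nhds ((hF_cont q).tendsto x)).liminf_eq.symm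
    _ ≤ liminf (fun s => ∫⁻ q, F s q ∂μ) (𝓝[S] x) := lintegral_liminf_le hF_meas
    _ ≤ liminf G (𝓝[S] x) := liminf_le_liminf (eventually_nhdsWithin_of_forall hSG)
    _ = G x := (tendsto_nhdsWithin_of_tendsto_nhds (hG.tendsto x)).liminf_eq

theorem integrable_and_eq_integral_of_dense {E M : Type*} [AddCommGroup E] [TopologicalSpace E]
    [ContinuousSub E] [FirstCountableTopology E] [MeasurableSpace M] {μ : Measure M}
    {f : E → M → ℝ} (hf_nonneg : ∀ x q, 0 ≤ f x q) (hf_meas : ∀ x, Measurable (f x))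
    (hf_cont : ∀ q, Continuous fun x => f x q)
    (hf_par : ∀ q a b, f (a + b) q + f (a - b) q = 2 * f a q + 2 * f b q)
    {t : E → ℝ} (ht : Continuous t) (ht_par : ∀ a b, t (a + b) + t (a - b) = 2 * t a + 2 * t b)
    {S : Set E} (hS : Dense S) (hSt : ∀ s ∈ S, Integrable (f s) μ ∧ t s = ∫ q, f s q ∂μ)
    (x : E) : Integrable (f x) μ ∧ t x = ∫ q, f x q ∂μ := by
  have ht_nonneg : ∀ x, 0 ≤ t x := hS.induction
    (fun s hs => (hSt s hs).2 ▸ integral_nonneg (hf_nonneg s)) (isClosed_le continuous_const ht)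
  have hlint : ∀ x, ∫⁻ q, ENNReal.ofReal (f x q) ∂μ ≤ ENNReal.ofReal (t x) :=
    lintegral_le_of_dense (fun x => (hf_meas x).ennreal_ofReal)
      (fun q => ENNReal.continuous_ofReal.comp (hf_cont q)) (ENNReal.continuous_ofReal.comp ht) hS
      fun s hs => by
        rw [(hSt s hs).2, ofReal_integral_eq_lintegral_ofReal (hSt s hs).1
          (ae_of_all _ (hf_nonneg s))]
  have hint : ∀ x, Integrable (f x) μ := fun x =>
    ⟨(hf_meas x).aestronglyMeasurable, (hasFiniteIntegral_iff_ofReal (ae_of_all _ (hf_nonneg x))).2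
      ((hlint x).trans_lt ENNReal.ofReal_lt_top)⟩
  have hle : ∀ x, ∫ q, f x q ∂μ ≤ t x := fun x => by
    rw [← ENNReal.ofReal_le_ofReal_iff (ht_nonneg x),
      ofReal_integral_eq_lintegral_ofReal (hint x) (ae_of_all _ (hf_nonneg x))]
    exact hlint x
  have hI_par : ∀ a b, ∫ q, f (a + b) q ∂μ + ∫ q, f (a - b) q ∂μ
      = 2 * ∫ q, f a q ∂μ + 2 * ∫ q, f b q ∂μ := fun a b => by
    rw [← integral_add (hint _) (hint _), ← integral_const_mul, ← integral_const_mul,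
      ← integral_add ((hint a).const_mul 2) ((hint b).const_mul 2)]
    exact integral_congr_ae (ae_of_all _ fun q => hf_par q a b)
  have ht_zero : t 0 = 0 := by
    have := ht_par 0 0
    rw [add_zero, sub_zero] at this
    linarith
  have hD_zero : Tendsto (fun x => t x - ∫ q, f x q ∂μ) (𝓝 0) (𝓝 0) :=
    squeeze_zero (fun x => sub_nonneg.2 (hle x))
      (fun x => sub_le_self _ (integral_nonneg (hf_nonneg x))) (ht_zero ▸ ht.tendsto 0)
  have hD := eq_zero_of_parallelogram_of_dense (fun x => sub_nonneg.2 (hle x))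
    (fun a b => by linarith [ht_par a b, hI_par a b]) hD_zero hS
    (fun s hs => sub_eq_zero.2 (hSt s hs).2) x
  exact ⟨hint x, sub_eq_zero.1 hD⟩

theorem stmt_2_general {H : Type*} [NormedAddCommGroup H] [InnerProductSpace ℂ H]
    {M : Type*} [MeasurableSpace M] (μ : Measure M)
    (S : Submodule ℂ H) (hS : Dense (S : Set H))
    (T : H →L[ℂ] H) (Λ : M → H →L[ℂ] H)
    (hmeas : ∀ ψ : H, Measurable fun q => (inner ℂ ψ (Λ q ψ) : ℂ))
    (hpos : ∀ q, ∀ ψ : H, 0 ≤ (inner ℂ ψ (Λ q ψ) : ℂ))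
    (hT : ∀ ψ : H, ψ ∈ S →
        Integrable (fun q => (inner ℂ ψ (Λ q ψ) : ℂ)) μ ∧
        (inner ℂ ψ (T ψ) : ℂ) = ∫ q, (inner ℂ ψ (Λ q ψ) : ℂ) ∂μ) :
    ∀ ψ : H,
        Integrable (fun q => (inner ℂ ψ (Λ q ψ) : ℂ)) μ ∧
        (inner ℂ ψ (T ψ) : ℂ) = ∫ q, (inner ℂ ψ (Λ q ψ) : ℂ) ∂μ := by
  have hΛ_re : ∀ ψ, ∫ q, ⟪ψ, Λ q ψ⟫_ℂ ∂μ = ((∫ q, (⟪ψ, Λ q ψ⟫_ℂ).re ∂μ : ℝ) : ℂ) := fun ψ => by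
    rw [← integral_complex_ofReal]
    exact integral_congr_ae (ae_of_all _ fun q => Complex.eq_re_of_nonneg (hpos q ψ))
  have hT_pos : ∀ ψ, 0 ≤ ⟪ψ, T ψ⟫_ℂ := hS.induction
    (fun s hs => by
      rw [(hT s hs).2, hΛ_re]
      exact Complex.zero_le_real.2 (integral_nonneg fun q => (Complex.nonneg_iff.1 (hpos q s)).1))
    (isClosed_le continuous_const (continuous_id.inner T.continuous))
  have hre_par : ∀ (P : H →L[ℂ] H) (a b : H), (⟪a + b, P (a + b)⟫_ℂ).re + (⟪a - b, P (a - b)⟫_ℂ).re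
      = 2 * (⟪a, P a⟫_ℂ).re + 2 * (⟪b, P b⟫_ℂ).re := fun P a b => by
    simpa only [Complex.add_re, Complex.mul_re, Complex.re_ofNat, Complex.im_ofNat, zero_mul,
      sub_zero] using congrArg Complex.re (inner_map_add_add_inner_map_sub P a b)
  intro ψ
  obtain ⟨hint, heq⟩ := integrable_and_eq_integral_of_dense
    (f := fun ψ q => (⟪ψ, Λ q ψ⟫_ℂ).re) (t := fun ψ => (⟪ψ, T ψ⟫_ℂ).re)
    (fun ψ q => (Complex.nonneg_iff.1 (hpos q ψ)).1) (fun ψ => Complex.measurable_re.comp (hmeas ψ))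
    (fun q => Complex.continuous_re.comp (continuous_id.inner (Λ q).continuous))
    (fun q => hre_par (Λ q))
    (Complex.continuous_re.comp (continuous_id.inner T.continuous)) (hre_par T) hS
    (fun s hs => ⟨(hT s hs).1.re, by rw [(hT s hs).2, hΛ_re, Complex.ofReal_re]⟩) ψ
  refine ⟨hint.ofReal.congr (ae_of_all _ fun q => (Complex.eq_re_of_nonneg (hpos q ψ)).symm), ?_⟩
  rw [hΛ_re, ← heq]
  exact Complex.eq_re_of_nonneg (hT_pos ψ)

/-- If `⟨ψ, Tψ⟩ = ∫ ⟨ψ, Λ(q)ψ⟩ dμ(q)` holds (with integrability) for all `ψ` in a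
dense subspace `S`, then it holds for all `ψ ∈ H`. -/
theorem stmt_2 {H : Type*} [NormedAddCommGroup H] [InnerProductSpace ℂ H]
    [CompleteSpace H] [TopologicalSpace.SeparableSpace H]
    {M : Type*} [MeasurableSpace M] (μ : Measure M) [SigmaFinite μ]
    (S : Submodule ℂ H) (hS : Dense (S : Set H))
    (T : H →L[ℂ] H) (Λ : M → H →L[ℂ] H)
    (hmeas : ∀ ψ : H, Measurable fun q => (inner ℂ ψ (Λ q ψ) : ℂ))
    (hpos : ∀ q, ∀ ψ : H, 0 ≤ (inner ℂ ψ (Λ q ψ) : ℂ))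
    (hT : ∀ ψ : H, ψ ∈ S →
        Integrable (fun q => (inner ℂ ψ (Λ q ψ) : ℂ)) μ ∧
        (inner ℂ ψ (T ψ) : ℂ) = ∫ q, (inner ℂ ψ (Λ q ψ) : ℂ) ∂μ) :
    ∀ ψ : H,
        Integrable (fun q => (inner ℂ ψ (Λ q ψ) : ℂ)) μ ∧
        (inner ℂ ψ (T ψ) : ℂ) = ∫ q, (inner ℂ ψ (Λ q ψ) : ℂ) ∂μ :=
  stmt_2_general μ S hS T Λ hmeas hpos hT
end

section
/- If Λ : M → B(H) is weakly measurable and Λ(q) is positive and bijective for every q ∈ M, then the map q ↦ Λ(q)⁻¹ is weakly measurable. -/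
/-!
For a positive operator `A` and `A ξ = ψ`, completing the square gives
`2 re ⟪φ, ψ⟫ - re ⟪φ, A φ⟫ = re ⟪ψ, ξ⟫ - re ⟪φ - ξ, A (φ - ξ)⟫ ≤ re ⟪ψ, ξ⟫`, with equality at
`φ = ξ`. Hence `⟪ψ, A⁻¹ ψ⟫` is the supremum of these continuous expressions over a countable dense
set of `φ`, and for `A = Λ q` each of them is measurable in `q`.
-/

open scoped ComplexOrder InnerProductSpace
open RCLike Set

theorem DenseRange.ciSup_comp_eq_of_isMaxOn {X ι α : Type*} [TopologicalSpace X]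
    [ConditionallyCompleteLinearOrder α] [TopologicalSpace α] [OrderClosedTopology α]
    {u : ι → X} (hu : DenseRange u) {f : X → α} (hf : Continuous f) {x₀ : X}
    (hmax : IsMaxOn f univ x₀) : ⨆ i, f (u i) = f x₀ := by
  have : Nonempty ι := hu.nonempty_iff.mpr ⟨x₀⟩
  refine ciSup_eq_of_forall_le_of_forall_lt_exists_gt (fun i => hmax (mem_univ _)) fun w hw => ?_
  obtain ⟨i, hi⟩ := hu.exists_mem_open (isOpen_lt continuous_const hf) ⟨x₀, hw⟩
  exact ⟨i, hi⟩

theorem ContinuousLinearMap.isPositive_of_forall_inner_nonneg {H : Type*}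
    [NormedAddCommGroup H] [InnerProductSpace ℂ H] {T : H →L[ℂ] H}
    (hT : ∀ x, 0 ≤ ⟪x, T x⟫_ℂ) : T.IsPositive := by
  rw [isPositive_iff_complex]
  intro x
  obtain ⟨hre, him⟩ := Complex.nonneg_iff.mp (hT x)
  have hreal : ⟪T x, x⟫_ℂ = ⟪x, T x⟫_ℂ := by
    rw [← inner_conj_symm]
    exact Complex.conj_eq_iff_im.mpr him.symm
  rw [hreal]
  exact ⟨Complex.ext (by simp) (by simp [← him]), hre⟩

section Variational

variable {𝕜 E : Type*} [RCLike 𝕜] [NormedAddCommGroup E] [InnerProductSpace 𝕜 E]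

theorem LinearMap.IsSymmetric.re_inner_sub_map_sub {A : E →ₗ[𝕜] E} (hA : A.IsSymmetric)
    {ξ ψ : E} (hξ : A ξ = ψ) (φ : E) :
    re ⟪φ - ξ, A (φ - ξ)⟫_𝕜 = re ⟪ξ, ψ⟫_𝕜 - (2 * re ⟪φ, ψ⟫_𝕜 - re ⟪φ, A φ⟫_𝕜) := by
  have hsymm : re ⟪ξ, A φ⟫_𝕜 = re ⟪φ, ψ⟫_𝕜 := by
    rw [← hA, hξ, inner_re_symm]
  simp only [map_sub, inner_sub_left, inner_sub_right, hξ, hsymm]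
  ring

theorem ContinuousLinearMap.IsPositive.two_re_inner_sub_re_inner_map_le {A : E →L[𝕜] E}
    (hA : A.IsPositive) {ξ ψ : E} (hξ : A ξ = ψ) (φ : E) :
    2 * re ⟪φ, ψ⟫_𝕜 - re ⟪φ, A φ⟫_𝕜 ≤ re ⟪ξ, ψ⟫_𝕜 := by
  have := hA.isSymmetric.re_inner_sub_map_sub hξ φ
  simp only [ContinuousLinearMap.coe_coe] at this
  linarith [hA.re_inner_nonneg_right (φ - ξ)]

theorem ContinuousLinearMap.IsPositive.inner_eq_ciSup {A : E →L[𝕜] E} (hA : A.IsPositive)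
    {ξ ψ : E} (hξ : A ξ = ψ) {u : ℕ → E} (hu : DenseRange u) :
    ⟪ψ, ξ⟫_𝕜 = ((⨆ n, 2 * re ⟪u n, ψ⟫_𝕜 - re ⟪u n, A (u n)⟫_𝕜 : ℝ) : 𝕜) := by
  have hcont : Continuous fun φ => 2 * re ⟪φ, ψ⟫_𝕜 - re ⟪φ, A φ⟫_𝕜 := by fun_prop
  have hmax : IsMaxOn (fun φ => 2 * re ⟪φ, ψ⟫_𝕜 - re ⟪φ, A φ⟫_𝕜) univ ξ :=
    isMaxOn_univ_iff.mpr fun φ => by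
      simpa only [hξ, two_mul, add_sub_cancel_right] using hA.two_re_inner_sub_re_inner_map_le hξ φ
  have hreal : ⟪ψ, ξ⟫_𝕜 = re ⟪ψ, ξ⟫_𝕜 := by
    rw [← hξ, ← ContinuousLinearMap.coe_coe, hA.isSymmetric.coe_re_inner_apply_self]
  rw [hu.ciSup_comp_eq_of_isMaxOn hcont hmax, hξ, hreal, inner_re_symm]
  ring_nf

end Variational

theorem stmt_6_general {H : Type*} [NormedAddCommGroup H] [InnerProductSpace ℂ H]
    [TopologicalSpace.SeparableSpace H]
    {M : Type*} [MeasurableSpace M]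
    (Λ inv : M → H →L[ℂ] H)
    (hmeas : ∀ ψ : H, Measurable fun q => (inner ℂ ψ (Λ q ψ) : ℂ))
    (hpos : ∀ q, ∀ ψ : H, 0 ≤ (inner ℂ ψ (Λ q ψ) : ℂ))
    (hinv : ∀ q, (Λ q).comp (inv q) = ContinuousLinearMap.id ℂ H ∧
        (inv q).comp (Λ q) = ContinuousLinearMap.id ℂ H) :
    ∀ ψ : H, Measurable fun q => (inner ℂ ψ (inv q ψ) : ℂ) := by
  intro ψ
  have : Nonempty H := ⟨0⟩
  set u := TopologicalSpace.denseSeq H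
  have hsup : ∀ q, ⟪ψ, inv q ψ⟫_ℂ
      = ((⨆ n, 2 * re ⟪u n, ψ⟫_ℂ - re ⟪u n, Λ q (u n)⟫_ℂ : ℝ) : ℂ) := fun q =>
    (ContinuousLinearMap.isPositive_of_forall_inner_nonneg (hpos q)).inner_eq_ciSup
      (congr($((hinv q).1) ψ)) (TopologicalSpace.denseRange_denseSeq H)
  simp only [hsup]
  refine Complex.measurable_ofReal.comp (Measurable.iSup fun n => ?_)
  exact measurable_const.sub (Complex.measurable_re.comp (hmeas (u n)))

/-- If `Λ` is weakly measurable and each `Λ(q)` is positive and bijective, then the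
(pointwise) inverse family is weakly measurable. -/
theorem stmt_6 {H : Type*} [NormedAddCommGroup H] [InnerProductSpace ℂ H]
    [CompleteSpace H] [TopologicalSpace.SeparableSpace H]
    {M : Type*} [MeasurableSpace M]
    (Λ inv : M → H →L[ℂ] H)
    (hmeas : ∀ ψ : H, Measurable fun q => (inner ℂ ψ (Λ q ψ) : ℂ))
    (hpos : ∀ q, ∀ ψ : H, 0 ≤ (inner ℂ ψ (Λ q ψ) : ℂ))
    (hbij : ∀ q, Function.Bijective (Λ q))
    (hinv : ∀ q, (Λ q).comp (inv q) = ContinuousLinearMap.id ℂ H ∧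
        (inv q).comp (Λ q) = ContinuousLinearMap.id ℂ H) :
    ∀ ψ : H, Measurable fun q => (inner ℂ ψ (inv q ψ) : ℂ) :=
  stmt_6_general Λ inv hmeas hpos hinv
end

section
/- Let H be a self-adjoint operator on a separable Hilbert space ℋ, and Λ : Q → B(ℋ) a weakly measurable family of bounded positive operators on a σ-finite Borel measure space (Q, μ) satisfying ∫_Q Λ(q) dμ(q) = λ I weakly, for a constant λ > 0. For t₀ < t₁ < … < tₙ and q₁,…,qₙ ∈ Q, define Lₙ = e^{−λ(tₙ−t₀)/2} Λ(qₙ)^{1/2} e^{−iH(tₙ−t_{n−1})} Λ(q_{n−1})^{1/2} ⋯ Λ(q₁)^{1/2} e^{−iH(t₁−t₀)} (and Lₙ = 0 if the times are not increasing), with L₀ = I. Then for every n ≥ 1 and every ψ ∈ ℋ, ∫_ℝ dtₙ ∫_Q μ(dqₙ) ⟨ψ, Lₙ* Lₙ ψ⟩ = ⟨ψ, L*_{n−1} L_{n−1} ψ⟩. -/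
/-!
For `t n < s` the new factor is `e^{-λ(s-tₙ)/2} Λ(r)^{1/2} U(s-tₙ)`, so
`‖Lₙ₊₁ψ‖² = e^{-λ(s-tₙ)} ⟨x, Λ(r) x⟩` with `x = U(s-tₙ) Lₙψ`, while for `s ≤ tₙ` it vanishes.
The normalisation `∫ Λ dμ = λ I` and unitarity of `U` turn the `r`-integral into
`λ e^{-λ(s-tₙ)} ‖Lₙψ‖²`, and `∫_{tₙ}^∞ λ e^{-λ(s-tₙ)} ds = 1`.
-/

open scoped ComplexOrder Classical
open MeasureTheory

/-- The operator product `Λ(qₙ)^{1/2} e^{−iH(tₙ−t_{n−1})} ⋯ Λ(q₁)^{1/2} e^{−iH(t₁−t₀)}`,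
built from the unitary group `U` (representing `t ↦ e^{−iHt}`) and collapse operators
`C q = Λ(q)^{1/2}`. -/
noncomputable def Lop {H Q : Type*} [NormedAddCommGroup H] [InnerProductSpace ℂ H]
    [CompleteSpace H]
    (U : ℝ → H →L[ℂ] H) (C : Q → H →L[ℂ] H) (t : ℕ → ℝ) (q : ℕ → Q) : ℕ → H →L[ℂ] H
  | 0 => 1
  | n + 1 => (C (q (n + 1))).comp ((U (t (n + 1) - t n)).comp (Lop U C t q n))

/-- `Lₙ = 1_{t₀<t₁<⋯<tₙ} e^{−λ(tₙ−t₀)/2} Λ(qₙ)^{1/2} e^{−iH(tₙ−t_{n−1})} ⋯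
Λ(q₁)^{1/2} e^{−iH(t₁−t₀)}`; it is `0` if the times are not increasing. -/
noncomputable def Lfull {H Q : Type*} [NormedAddCommGroup H] [InnerProductSpace ℂ H]
    [CompleteSpace H]
    (U : ℝ → H →L[ℂ] H) (C : Q → H →L[ℂ] H) (l : ℝ) (t : ℕ → ℝ) (q : ℕ → Q)
    (n : ℕ) : H →L[ℂ] H :=
  if ∀ i, i < n → t i < t (i + 1) then
    (Real.exp (-(l * (t n - t 0)) / 2) : ℂ) • Lop U C t q n
  else 0

open Set Function

theorem integral_Ioi_exp_neg_mul_sub {l : ℝ} (hl : 0 < l) (a : ℝ) :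
    ∫ s in Ioi a, Real.exp (-(l * (s - a))) = l⁻¹ := by
  have hsplit : ∀ s, Real.exp (-(l * (s - a))) = Real.exp (l * a) * Real.exp (-l * s) := by
    intro s; rw [← Real.exp_add]; ring_nf
  simp_rw [hsplit]
  rw [integral_const_mul, integral_exp_mul_Ioi (neg_neg_of_pos hl), mul_div_assoc',
    mul_neg, ← Real.exp_add]
  field_simp
  simp

namespace ContinuousLinearMap

variable {E : Type*} [NormedAddCommGroup E] [InnerProductSpace ℂ E] [CompleteSpace E]
    {𝕜 F : Type*} [RCLike 𝕜] [NormedAddCommGroup F] [InnerProductSpace 𝕜 F] [CompleteSpace F]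

theorem isSelfAdjoint_of_inner_nonneg {A : E →L[ℂ] E} (hA : ∀ x, 0 ≤ inner ℂ x (A x)) :
    IsSelfAdjoint A := by
  refine LinearMap.IsSymmetric.isSelfAdjoint ?_
  rw [LinearMap.isSymmetric_iff_inner_map_self_real]
  intro v
  rw [← inner_conj_symm, Complex.conj_conj]
  exact (Complex.conj_eq_iff_im.mpr (Complex.nonneg_iff.mp (hA v)).2.symm).symm

theorem norm_sq_apply_of_isSelfAdjoint {A : F →L[𝕜] F} (hA : IsSelfAdjoint A) (x : F) :
    ‖A x‖ ^ 2 = RCLike.re (inner 𝕜 x ((A * A) x)) := by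
  rw [apply_norm_sq_eq_inner_adjoint_right, hA.adjoint_eq]
  rfl

end ContinuousLinearMap

section Flash

variable {H Q : Type*} [NormedAddCommGroup H] [InnerProductSpace ℂ H] [CompleteSpace H]

theorem integral_norm_sq_sqrt_apply [MeasurableSpace Q] {μ : Measure Q} {Λ C : Q → H →L[ℂ] H}
    {l : ℝ} (hCpos : ∀ r, ∀ ψ : H, 0 ≤ (inner ℂ ψ (C r ψ) : ℂ)) (hC : ∀ r, C r * C r = Λ r)
    (hΛint : ∀ ψ : H, Integrable (fun r => (inner ℂ ψ (Λ r ψ) : ℂ)) μ)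
    (hΛnorm : ∀ ψ : H, ∫ r, (inner ℂ ψ (Λ r ψ) : ℂ) ∂μ = (l : ℂ) * (‖ψ‖ : ℂ) ^ 2) (x : H) :
    ∫ r, ‖C r x‖ ^ 2 ∂μ = l * ‖x‖ ^ 2 := by
  simp_rw [ContinuousLinearMap.norm_sq_apply_of_isSelfAdjoint
    (ContinuousLinearMap.isSelfAdjoint_of_inner_nonneg (hCpos _)), hC]
  rw [integral_re (hΛint x), hΛnorm x]
  norm_cast

theorem Lop_congr (U : ℝ → H →L[ℂ] H) (C : Q → H →L[ℂ] H) {t t' : ℕ → ℝ} {q q' : ℕ → Q}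
    {k : ℕ} (ht : ∀ i ≤ k, t' i = t i) (hq : ∀ i ≤ k, q' i = q i) :
    Lop U C t' q' k = Lop U C t q k := by
  induction k with
  | zero => rfl
  | succ m ih =>
    simp only [Lop, ht (m + 1) le_rfl, ht m m.le_succ, hq (m + 1) le_rfl,
      ih (fun i hi => ht i (hi.trans m.le_succ)) (fun i hi => hq i (hi.trans m.le_succ))]

theorem Lfull_update_succ (U : ℝ → H →L[ℂ] H) (C : Q → H →L[ℂ] H) (l : ℝ) (t : ℕ → ℝ)
    (q : ℕ → Q) (n : ℕ) (s : ℝ) (r : Q) :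
    Lfull U C l (update t (n + 1) s) (update q (n + 1) r) (n + 1) =
      if t n < s then
        (Real.exp (-(l * (s - t n)) / 2) : ℂ) •
          (C r).comp ((U (s - t n)).comp (Lfull U C l t q n))
      else 0 := by
  have ht : ∀ i ≤ n, update t (n + 1) s i = t i := fun i hi => update_of_ne (by omega) _ _
  have hq : ∀ i ≤ n, update q (n + 1) r i = q i := fun i hi => update_of_ne (by omega) _ _
  have hinc : (∀ i < n + 1, update t (n + 1) s i < update t (n + 1) s (i + 1)) ↔
      (∀ i < n, t i < t (i + 1)) ∧ t n < s := by
    rw [Nat.forall_lt_succ_right, ht n le_rfl, update_self]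
    refine and_congr_left' (forall₂_congr fun i hi => ?_)
    rw [ht i hi.le, ht (i + 1) hi]
  unfold Lfull
  simp only [hinc, Lop, Lop_congr U C ht hq, ht 0 (Nat.zero_le n), ht n le_rfl, update_self]
  by_cases hs : t n < s
  · by_cases hn : ∀ i < n, t i < t (i + 1)
    · rw [if_pos ⟨hn, hs⟩, if_pos hs, if_pos hn, ContinuousLinearMap.comp_smul,
        ContinuousLinearMap.comp_smul, smul_smul, ← Complex.ofReal_mul, ← Real.exp_add]
      congr 3
      ring
    · rw [if_neg (fun h => hn h.1), if_pos hs, if_neg hn]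
      simp
  · rw [if_neg (fun h => hs h.2), if_neg hs]

end Flash

theorem stmt_12_general {H Q : Type*} [NormedAddCommGroup H] [InnerProductSpace ℂ H]
    [CompleteSpace H]
    [MeasurableSpace Q] (μ : Measure Q)
    (U : ℝ → H →L[ℂ] H)
    (hUunitary : ∀ s, U s ∈ unitary (H →L[ℂ] H))
    (Λ C : Q → H →L[ℂ] H)
    (hCpos : ∀ r, ∀ ψ : H, 0 ≤ (inner ℂ ψ (C r ψ) : ℂ))
    (hC : ∀ r, C r * C r = Λ r)
    (l : ℝ) (hl : 0 < l)
    (hΛint : ∀ ψ : H, Integrable (fun r => (inner ℂ ψ (Λ r ψ) : ℂ)) μ)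
    (hΛnorm : ∀ ψ : H, ∫ r, (inner ℂ ψ (Λ r ψ) : ℂ) ∂μ = (l : ℂ) * (‖ψ‖ : ℂ) ^ 2)
    (t : ℕ → ℝ) (q : ℕ → Q) (n : ℕ) (ψ : H) :
    ∫ s : ℝ, ∫ r : Q,
        ‖Lfull U C l (Function.update t (n + 1) s) (Function.update q (n + 1) r)
            (n + 1) ψ‖ ^ 2 ∂μ
      = ‖Lfull U C l t q n ψ‖ ^ 2 := by
  set φ := Lfull U C l t q n ψ
  have hslice : ∀ s,
      ∫ r, ‖Lfull U C l (update t (n + 1) s) (update q (n + 1) r) (n + 1) ψ‖ ^ 2 ∂μ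
        = (Ioi (t n)).indicator (fun s => Real.exp (-(l * (s - t n))) * (l * ‖φ‖ ^ 2)) s := by
    intro s
    simp only [Lfull_update_succ]
    by_cases hs : t n < s
    · have hexp : ‖(Real.exp (-(l * (s - t n)) / 2) : ℂ)‖ ^ 2 = Real.exp (-(l * (s - t n))) := by
        rw [Complex.norm_real, Real.norm_of_nonneg (Real.exp_pos _).le, ← Real.exp_nat_mul]
        ring_nf
      simp only [if_pos hs, indicator_of_mem (mem_Ioi.mpr hs), smul_apply,
        ContinuousLinearMap.comp_apply, norm_smul, mul_pow, hexp]
      rw [integral_const_mul, integral_norm_sq_sqrt_apply hCpos hC hΛint hΛnorm,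
        ContinuousLinearMap.norm_map_of_mem_unitary (hUunitary _)]
    · simp [hs]
  simp only [hslice]
  rw [integral_indicator measurableSet_Ioi, integral_mul_const, integral_Ioi_exp_neg_mul_sub hl]
  field_simp

/-- The fundamental consistency property of the GRWf operators: integrating
`⟨ψ, Lₙ* Lₙ ψ⟩ = ‖Lₙψ‖²` over the last flash `(tₙ, qₙ)` gives `‖L_{n−1}ψ‖²`,
assuming the flash rate operators `Λ` are positive, weakly measurable, with
`∫ Λ(q) dμ(q) = λ I` weakly, `C q` is the positive square root of `Λ q`, and
`U` is a (weakly continuous) one-parameter unitary group `e^{−iHt}` generated by the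
self-adjoint operator `H` (ℏ = 1). -/
theorem stmt_12 {H Q : Type*} [NormedAddCommGroup H] [InnerProductSpace ℂ H]
    [CompleteSpace H] [TopologicalSpace.SeparableSpace H]
    [MeasurableSpace Q] (μ : Measure Q) [SigmaFinite μ]
    (U : ℝ → H →L[ℂ] H)
    (hUunitary : ∀ s, U s ∈ unitary (H →L[ℂ] H))
    (hU0 : U 0 = 1)
    (hUadd : ∀ s u : ℝ, U (s + u) = U s * U u)
    (hUcont : ∀ φ ψ : H, Continuous fun s => (inner ℂ φ (U s ψ) : ℂ))
    (Λ C : Q → H →L[ℂ] H)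
    (hΛmeas : ∀ ψ : H, Measurable fun r => (inner ℂ ψ (Λ r ψ) : ℂ))
    (hΛpos : ∀ r, ∀ ψ : H, 0 ≤ (inner ℂ ψ (Λ r ψ) : ℂ))
    (hCpos : ∀ r, ∀ ψ : H, 0 ≤ (inner ℂ ψ (C r ψ) : ℂ))
    (hC : ∀ r, C r * C r = Λ r)
    (l : ℝ) (hl : 0 < l)
    (hΛint : ∀ ψ : H, Integrable (fun r => (inner ℂ ψ (Λ r ψ) : ℂ)) μ)
    (hΛnorm : ∀ ψ : H, ∫ r, (inner ℂ ψ (Λ r ψ) : ℂ) ∂μ = (l : ℂ) * (‖ψ‖ : ℂ) ^ 2)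
    (t : ℕ → ℝ) (q : ℕ → Q) (n : ℕ) (ψ : H) :
    ∫ s : ℝ, ∫ r : Q,
        ‖Lfull U C l (Function.update t (n + 1) s) (Function.update q (n + 1) r)
            (n + 1) ψ‖ ^ 2 ∂μ
      = ‖Lfull U C l t q n ψ‖ ^ 2 :=
  stmt_12_general μ U hUunitary Λ C hCpos hC l hl hΛint hΛnorm t q n ψ
end

section
/- Let W : {(s,t) : t₀ ≤ s ≤ t} → B(H) be a weakly measurable family of bounded operators satisfying, for all ψ and all t ≥ s, ⟨ψ, (W_s^{t*}W_s^t − I)ψ⟩ = −∫_s^t ⟨W_s^{t'}ψ, Λ(t') W_s^{t'}ψ⟩ dt', where each Λ(t') is a positive bounded operator with t' ↦ Λ(t') weakly measurable. Then: (a) W_s^{t*}W_s^t ≤ I for all t ≥ s; (b) t ↦ W_s^{t*}W_s^t is monotonically decreasing in the operator order; (c) there exists a unique positive bounded operator T_s with ⟨ψ, T_sψ⟩ = lim_{t→∞} ⟨ψ, W_s^{t*}W_s^tψ⟩ for all ψ, and T_s = I − ∫_s^∞ W_s^{t'*} Λ(t') W_s^{t'} dt' (as a weak integral). -/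
/-!
Writing `‖W_s^t ψ‖² = ‖ψ‖² - ∫_s^t f` with `f ≥ 0` shows that `t ↦ ‖W_s^t ψ‖²` decreases from
`‖ψ‖²`; being nonnegative, it converges, `f` is integrable on `(s, ∞)` and the limit is
`‖ψ‖² - ∫_s^∞ f`. By polarization the forms `⟨W_s^t φ, W_s^t ψ⟩` converge as well, and since every
`W_s^t` is a contraction the limit is a bounded sesquilinear form, i.e. `⟨φ, T_s ψ⟩` for a bounded
operator `T_s` (Riesz). Over `ℂ` an operator is determined by its quadratic form, which gives
uniqueness.
-/

open scoped ComplexOrder InnerProductSpace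
open MeasureTheory Filter Topology Set

section WeakOperatorLimit

variable {𝕜 E F ι : Type*} [RCLike 𝕜] [NormedAddCommGroup E] [InnerProductSpace 𝕜 E]
  [NormedAddCommGroup F] [InnerProductSpace 𝕜 F] {l : Filter ι}

theorem exists_tendsto_inner_apply_of_tendsto_norm_sq (A : ι → E →L[𝕜] F) {L : E → ℝ}
    (hL : ∀ ψ, Tendsto (fun t => ‖A t ψ‖ ^ 2) l (𝓝 (L ψ))) (φ ψ : E) :
    ∃ b, Tendsto (fun t => ⟪A t φ, A t ψ⟫_𝕜) l (𝓝 b) := by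
  have hL' (χ : E) : Tendsto (fun t => (‖A t χ‖ : 𝕜) ^ 2) l (𝓝 (L χ : 𝕜)) := by
    simpa [Function.comp_def] using ((RCLike.continuous_ofReal (K := 𝕜)).tendsto _).comp (hL χ)
  refine ⟨_, ((((hL' (φ + ψ)).sub (hL' (φ - ψ))).add
    (((hL' (φ - (RCLike.I : 𝕜) • ψ)).sub (hL' (φ + (RCLike.I : 𝕜) • ψ))).mul_const
      (RCLike.I : 𝕜))).div_const 4).congr fun t => ?_⟩
  simp only [inner_eq_sum_norm_sq_div_four, map_add, map_sub, map_smul]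

theorem exists_tendsto_inner_apply_of_eventually_norm_le [CompleteSpace E] [l.NeBot]
    (S : ι → E →L[𝕜] E) {C : ℝ} (hS : ∀ᶠ t in l, ‖S t‖ ≤ C)
    (h : ∀ φ ψ, ∃ b, Tendsto (fun t => ⟪φ, S t ψ⟫_𝕜) l (𝓝 b)) :
    ∃ T : E →L[𝕜] E, ∀ φ ψ, Tendsto (fun t => ⟪φ, S t ψ⟫_𝕜) l (𝓝 ⟪φ, T ψ⟫_𝕜) := by
  choose B hB using h
  have bound (φ ψ : E) : ‖B φ ψ‖ ≤ C * ‖φ‖ * ‖ψ‖ := by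
    refine le_of_tendsto (hB φ ψ).norm ?_
    filter_upwards [hS] with t ht
    calc ‖⟪φ, S t ψ⟫_𝕜‖ ≤ ‖φ‖ * (‖S t‖ * ‖ψ‖) :=
          (norm_inner_le_norm _ _).trans (by gcongr; exact (S t).le_opNorm ψ)
      _ ≤ C * ‖φ‖ * ‖ψ‖ := by rw [mul_comm C, mul_assoc]; gcongr
  let B' : E →L⋆[𝕜] E →L[𝕜] 𝕜 := LinearMap.mkContinuous₂
    (LinearMap.mk₂'ₛₗ (starRingEnd 𝕜) (RingHom.id 𝕜) B
      (fun φ₁ φ₂ ψ => tendsto_nhds_unique (hB _ _) <| by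
        simpa only [inner_add_left] using (hB φ₁ ψ).add (hB φ₂ ψ))
      (fun c φ ψ => tendsto_nhds_unique (hB _ _) <| by
        simpa only [inner_smul_left, smul_eq_mul] using (hB φ ψ).const_mul (starRingEnd 𝕜 c))
      (fun φ ψ₁ ψ₂ => tendsto_nhds_unique (hB _ _) <| by
        simpa only [map_add, inner_add_right] using (hB φ ψ₁).add (hB φ ψ₂))
      (fun c φ ψ => tendsto_nhds_unique (hB _ _) <| by
        simpa only [map_smul, inner_smul_right, smul_eq_mul, RingHom.id_apply]
          using (hB φ ψ).const_mul c))
    C bound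
  -- `continuousLinearMapOfBilin` represents `B'` with the operator in the left slot.
  refine ⟨(InnerProductSpace.continuousLinearMapOfBilin B').adjoint, fun φ ψ => ?_⟩
  rw [ContinuousLinearMap.adjoint_inner_right, InnerProductSpace.continuousLinearMapOfBilin_apply]
  exact hB φ ψ

theorem exists_inner_self_eq_of_tendsto_norm_sq [CompleteSpace E] [CompleteSpace F] [l.NeBot]
    (A : ι → E →L[𝕜] F) {C : ℝ} (hA : ∀ᶠ t in l, ‖A t‖ ≤ C) {L : E → ℝ}
    (hL : ∀ ψ, Tendsto (fun t => ‖A t ψ‖ ^ 2) l (𝓝 (L ψ))) :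
    ∃ T : E →L[𝕜] E, ∀ ψ, ⟪ψ, T ψ⟫_𝕜 = L ψ := by
  have inner_eq (t : ι) (φ ψ : E) : ⟪φ, (A t).adjoint (A t ψ)⟫_𝕜 = ⟪A t φ, A t ψ⟫_𝕜 :=
    ContinuousLinearMap.adjoint_inner_right _ _ _
  obtain ⟨T, hT⟩ := exists_tendsto_inner_apply_of_eventually_norm_le
    (fun t => (A t).adjoint ∘L A t) (C := C * C)
    (hA.mono fun t ht => by
      rw [ContinuousLinearMap.norm_adjoint_comp_self]
      exact mul_self_le_mul_self (norm_nonneg _) ht)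
    (fun φ ψ => by
      simpa only [ContinuousLinearMap.comp_apply, inner_eq]
        using exists_tendsto_inner_apply_of_tendsto_norm_sq A hL φ ψ)
  refine ⟨T, fun ψ => tendsto_nhds_unique (hT ψ ψ) ?_⟩
  simpa [Function.comp_def, inner_eq, inner_self_eq_norm_sq_to_K]
    using ((RCLike.continuous_ofReal (K := 𝕜)).tendsto _).comp (hL ψ)

end WeakOperatorLimit

theorem ContinuousLinearMap.eq_of_re_inner_self_eq {H : Type*} [NormedAddCommGroup H]
    [InnerProductSpace ℂ H] {T T' : H →L[ℂ] H} (hT : ∀ ψ, 0 ≤ ⟪ψ, T ψ⟫_ℂ)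
    (hT' : ∀ ψ, 0 ≤ ⟪ψ, T' ψ⟫_ℂ) (h : ∀ ψ, (⟪ψ, T ψ⟫_ℂ).re = (⟪ψ, T' ψ⟫_ℂ).re) : T = T' := by
  have im_eq (ψ : H) : (⟪ψ, T ψ⟫_ℂ).im = (⟪ψ, T' ψ⟫_ℂ).im := by
    rw [← (Complex.le_def.mp (hT ψ)).2, ← (Complex.le_def.mp (hT' ψ)).2]
  refine ContinuousLinearMap.coe_injective <| (ext_inner_map _ _).mp fun ψ => ?_
  rw [← inner_conj_symm, ContinuousLinearMap.coe_coe, ContinuousLinearMap.coe_coe,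
    ← inner_conj_symm (T' ψ), Complex.ext (h ψ) (im_eq ψ)]

section MonotoneIntegral

variable {f g : ℝ → ℝ} {a c : ℝ}

theorem antitoneOn_of_eq_sub_intervalIntegral (hf : ∀ x, a ≤ x → 0 ≤ f x)
    (hfi : ∀ t, a ≤ t → IntervalIntegrable f volume a t)
    (hg : ∀ t, a ≤ t → g t = c - ∫ x in a..t, f x) : AntitoneOn g (Ici a) := by
  intro t₁ ht₁ t₂ ht₂ h
  rw [hg t₁ ht₁, hg t₂ ht₂, sub_le_sub_iff_left]
  refine intervalIntegral.integral_mono_interval le_rfl ht₁ h ?_ (hfi t₂ ht₂)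
  exact (ae_restrict_mem measurableSet_Ioc).mono fun x hx => hf x hx.1.le

theorem tendsto_of_eq_sub_intervalIntegral (hf : ∀ x, a ≤ x → 0 ≤ f x)
    (hfi : ∀ t, a ≤ t → IntervalIntegrable f volume a t)
    (hg : ∀ t, a ≤ t → g t = c - ∫ x in a..t, f x) (hg₀ : ∀ t, 0 ≤ g t) :
    IntegrableOn f (Ioi a) ∧ Tendsto g atTop (𝓝 (c - ∫ x in Ioi a, f x)) := by
  have hint : IntegrableOn f (Ioi a) := by
    refine integrableOn_Ioi_of_intervalIntegral_norm_bounded c a (fun t => ?_) tendsto_id ?_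
    · rcases le_or_gt a t with h | h
      · exact (hfi t h).1
      · simp [Ioc_eq_empty_of_le h.le]
    · filter_upwards [eventually_ge_atTop a] with t ht
      rw [id, intervalIntegral.integral_congr fun x hx => Real.norm_of_nonneg
        (hf x (by rw [uIcc_of_le ht] at hx; exact hx.1))]
      linarith [hg t ht, hg₀ t]
  refine ⟨hint, ((intervalIntegral_tendsto_integral_Ioi a hint tendsto_id).const_sub c).congr' ?_⟩
  filter_upwards [eventually_ge_atTop a] with t ht
  exact (hg t ht).symm

end MonotoneIntegral

theorem stmt_13_general {H : Type*} [NormedAddCommGroup H] [InnerProductSpace ℂ H]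
    [CompleteSpace H]
    (t₀ : ℝ) (W : ℝ → ℝ → H →L[ℂ] H) (Λ : ℝ → H →L[ℂ] H)
    (hΛpos : ∀ u, ∀ ψ : H, 0 ≤ (inner ℂ ψ (Λ u ψ) : ℂ))
    (hWint : ∀ s, t₀ ≤ s → ∀ t, s ≤ t → ∀ ψ : H,
        IntervalIntegrable
          (fun u => ((inner ℂ (W s u ψ) (Λ u (W s u ψ)) : ℂ)).re) volume s t)
    (hW : ∀ s, t₀ ≤ s → ∀ t, s ≤ t → ∀ ψ : H,
        ‖W s t ψ‖ ^ 2 - ‖ψ‖ ^ 2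
          = -∫ u in s..t, ((inner ℂ (W s u ψ) (Λ u (W s u ψ)) : ℂ)).re) :
    -- (a) W_s^{t*} W_s^t ≤ I
    (∀ s, t₀ ≤ s → ∀ t, s ≤ t → ∀ ψ : H, ‖W s t ψ‖ ≤ ‖ψ‖) ∧
    -- (b) t ↦ W_s^{t*} W_s^t is monotonically decreasing in the operator order
    (∀ s, t₀ ≤ s → ∀ t₁ t₂, s ≤ t₁ → t₁ ≤ t₂ → ∀ ψ : H,
        ‖W s t₂ ψ‖ ≤ ‖W s t₁ ψ‖) ∧
    -- (c) existence and uniqueness of the positive limit operator T_s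
    (∀ s, t₀ ≤ s → ∃! T : H →L[ℂ] H,
        (∀ ψ : H, 0 ≤ (inner ℂ ψ (T ψ) : ℂ)) ∧
        (∀ ψ : H, Filter.Tendsto (fun t => ‖W s t ψ‖ ^ 2) Filter.atTop
            (nhds ((inner ℂ ψ (T ψ) : ℂ)).re))) ∧
    -- (c') the limit operator is I minus the weak integral over (s, ∞)
    (∀ s, t₀ ≤ s → ∀ T : H →L[ℂ] H,
        ((∀ ψ : H, 0 ≤ (inner ℂ ψ (T ψ) : ℂ)) ∧
         (∀ ψ : H, Filter.Tendsto (fun t => ‖W s t ψ‖ ^ 2) Filter.atTop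
            (nhds ((inner ℂ ψ (T ψ) : ℂ)).re))) →
        ∀ ψ : H,
          IntegrableOn (fun u => ((inner ℂ (W s u ψ) (Λ u (W s u ψ)) : ℂ)).re)
            (Set.Ioi s) ∧
          ((inner ℂ ψ (T ψ) : ℂ)).re
            = ‖ψ‖ ^ 2 - ∫ u in Set.Ioi s,
                ((inner ℂ (W s u ψ) (Λ u (W s u ψ)) : ℂ)).re) := by
  have hf s ψ u (_ : s ≤ u) : 0 ≤ (⟪W s u ψ, Λ u (W s u ψ)⟫_ℂ).re :=
    (Complex.le_def.mp (hΛpos u _)).1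
  have hg s (hs : t₀ ≤ s) ψ t (ht : s ≤ t) : ‖W s t ψ‖ ^ 2
      = ‖ψ‖ ^ 2 - ∫ u in s..t, (⟪W s u ψ, Λ u (W s u ψ)⟫_ℂ).re := by
    linarith [hW s hs t ht ψ]
  have hlim s (hs : t₀ ≤ s) ψ := tendsto_of_eq_sub_intervalIntegral (hf s ψ)
    (fun t ht => hWint s hs t ht ψ) (hg s hs ψ) fun t => sq_nonneg ‖W s t ψ‖
  have hmono : ∀ s, t₀ ≤ s → ∀ t₁ t₂, s ≤ t₁ → t₁ ≤ t₂ → ∀ ψ : H,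
      ‖W s t₂ ψ‖ ≤ ‖W s t₁ ψ‖ := fun s hs t₁ t₂ h₁ h₂ ψ =>
    (pow_le_pow_iff_left₀ (norm_nonneg _) (norm_nonneg _) two_ne_zero).mp <|
      antitoneOn_of_eq_sub_intervalIntegral (hf s ψ) (fun t ht => hWint s hs t ht ψ)
        (hg s hs ψ) h₁ (h₁.trans h₂) h₂
  have hcontr s (hs : t₀ ≤ s) t (ht : s ≤ t) ψ : ‖W s t ψ‖ ≤ ‖ψ‖ := by
    have hinit : ‖W s s ψ‖ = ‖ψ‖ := by
      simpa [sq_eq_sq₀ (norm_nonneg _) (norm_nonneg _)] using hg s hs ψ s le_rfl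
    exact hinit ▸ hmono s hs s t le_rfl ht ψ
  refine ⟨hcontr, hmono, fun s hs => ?_, fun s hs T ⟨_, hT⟩ ψ =>
    ⟨(hlim s hs ψ).1, tendsto_nhds_unique (hT ψ) (hlim s hs ψ).2⟩⟩
  obtain ⟨T, hT⟩ := exists_inner_self_eq_of_tendsto_norm_sq (W s) (C := 1)
    ((eventually_ge_atTop s).mono fun t ht =>
      (W s t).opNorm_le_bound zero_le_one fun ψ => by simpa using hcontr s hs t ht ψ)
    fun ψ => (hlim s hs ψ).2
  have hpos ψ : 0 ≤ ⟪ψ, T ψ⟫_ℂ := by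
    rw [hT]
    exact Complex.zero_le_real.mpr <| ge_of_tendsto' (hlim s hs ψ).2 fun t => sq_nonneg _
  have hTlim ψ : Tendsto (fun t => ‖W s t ψ‖ ^ 2) atTop (𝓝 (⟪ψ, T ψ⟫_ℂ).re) := by
    rw [hT]
    exact (hlim s hs ψ).2
  exact ⟨T, ⟨hpos, hTlim⟩, fun T' ⟨hT'pos, hT'lim⟩ =>
    ContinuousLinearMap.eq_of_re_inner_self_eq hT'pos hpos fun ψ =>
      tendsto_nhds_unique (hT'lim ψ) (hTlim ψ)⟩

/-- For a weakly measurable family `W_s^t` satisfying the weak identity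
`⟨ψ,(W_s^{t*}W_s^t − I)ψ⟩ = −∫_s^t ⟨W_s^{t'}ψ, Λ(t') W_s^{t'}ψ⟩ dt'` with `Λ(t') ≥ 0`:
(a) `W_s^{t*}W_s^t ≤ I`; (b) `t ↦ W_s^{t*}W_s^t` is decreasing; (c) there is a unique
positive bounded `T_s` with `⟨ψ,T_sψ⟩ = lim_{t→∞}⟨ψ,W_s^{t*}W_s^tψ⟩`, and
`T_s = I − ∫_s^∞ W_s^{t'*}Λ(t')W_s^{t'} dt'` weakly. (Note `⟨ψ, W_s^{t*}W_s^t ψ⟩ =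
‖W_s^t ψ‖²`.) -/
theorem stmt_13 {H : Type*} [NormedAddCommGroup H] [InnerProductSpace ℂ H]
    [CompleteSpace H] [TopologicalSpace.SeparableSpace H]
    (t₀ : ℝ) (W : ℝ → ℝ → H →L[ℂ] H) (Λ : ℝ → H →L[ℂ] H)
    (hΛpos : ∀ u, ∀ ψ : H, 0 ≤ (inner ℂ ψ (Λ u ψ) : ℂ))
    (hΛmeas : ∀ φ ψ : H, Measurable fun u => (inner ℂ φ (Λ u ψ) : ℂ))
    (hWmeas : ∀ φ ψ : H, Measurable fun p : ℝ × ℝ => (inner ℂ φ (W p.1 p.2 ψ) : ℂ))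
    (hWint : ∀ s, t₀ ≤ s → ∀ t, s ≤ t → ∀ ψ : H,
        IntervalIntegrable
          (fun u => ((inner ℂ (W s u ψ) (Λ u (W s u ψ)) : ℂ)).re) volume s t)
    (hW : ∀ s, t₀ ≤ s → ∀ t, s ≤ t → ∀ ψ : H,
        ‖W s t ψ‖ ^ 2 - ‖ψ‖ ^ 2
          = -∫ u in s..t, ((inner ℂ (W s u ψ) (Λ u (W s u ψ)) : ℂ)).re) :
    -- (a) W_s^{t*} W_s^t ≤ I
    (∀ s, t₀ ≤ s → ∀ t, s ≤ t → ∀ ψ : H, ‖W s t ψ‖ ≤ ‖ψ‖) ∧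
    -- (b) t ↦ W_s^{t*} W_s^t is monotonically decreasing in the operator order
    (∀ s, t₀ ≤ s → ∀ t₁ t₂, s ≤ t₁ → t₁ ≤ t₂ → ∀ ψ : H,
        ‖W s t₂ ψ‖ ≤ ‖W s t₁ ψ‖) ∧
    -- (c) existence and uniqueness of the positive limit operator T_s
    (∀ s, t₀ ≤ s → ∃! T : H →L[ℂ] H,
        (∀ ψ : H, 0 ≤ (inner ℂ ψ (T ψ) : ℂ)) ∧
        (∀ ψ : H, Filter.Tendsto (fun t => ‖W s t ψ‖ ^ 2) Filter.atTop
            (nhds ((inner ℂ ψ (T ψ) : ℂ)).re))) ∧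
    -- (c') the limit operator is I minus the weak integral over (s, ∞)
    (∀ s, t₀ ≤ s → ∀ T : H →L[ℂ] H,
        ((∀ ψ : H, 0 ≤ (inner ℂ ψ (T ψ) : ℂ)) ∧
         (∀ ψ : H, Filter.Tendsto (fun t => ‖W s t ψ‖ ^ 2) Filter.atTop
            (nhds ((inner ℂ ψ (T ψ) : ℂ)).re))) →
        ∀ ψ : H,
          IntegrableOn (fun u => ((inner ℂ (W s u ψ) (Λ u (W s u ψ)) : ℂ)).re)
            (Set.Ioi s) ∧
          ((inner ℂ ψ (T ψ) : ℂ)).re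
            = ‖ψ‖ ^ 2 - ∫ u in Set.Ioi s,
                ((inner ℂ (W s u ψ) (Λ u (W s u ψ)) : ℂ)).re) :=
  stmt_13_general t₀ W Λ hΛpos hWint hW
end

section
/- Let ℋ = ℋ_sys ⊗ ℋ_env be a tensor product of separable Hilbert spaces, G a POVM on a measurable space (Ω, 𝒜_Ω) acting on ℋ, φ ∈ ℋ_env a unit vector, and ζ : (Ω, 𝒜_Ω) → (V, 𝒜_V) a measurable function. Then there exists a POVM E on (V, 𝒜_V) acting on ℋ_sys such that for every unit vector ψ ∈ ℋ_sys, the pushforward under ζ of the probability measure A ↦ ⟨ψ⊗φ, G(A)(ψ⊗φ)⟩ equals B ↦ ⟨ψ, E(B)ψ⟩. Explicitly, E(B) = L_φ G(ζ⁻¹(B)) (· ⊗ φ), where L_φ is the partial scalar product with φ (the adjoint of ψ ↦ ψ⊗φ). -/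
/-! The POVM `E` is obtained from `G` in two steps, each of which preserves the POVM axioms:
pull `G` back along the measurable map `ζ`, then compress it by the isometry `ψ ↦ ψ ⊗ φ`,
i.e. conjugate by it, `E(B) = T† G(ζ⁻¹ B) T`. Compression leaves the quadratic forms
unchanged, `⟨ψ, T† S T ψ⟩ = ⟨Tψ, S Tψ⟩`, which gives the required identity. -/

open scoped ComplexOrder
open MeasureTheory

structure POVM (Ω : Type*) [MeasurableSpace Ω] (H : Type*) [NormedAddCommGroup H]
    [InnerProductSpace ℂ H] [CompleteSpace H] where
  toFun : Set Ω → (H →L[ℂ] H)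
  univ_eq : toFun Set.univ = 1
  pos : ∀ A : Set Ω, MeasurableSet A → ∀ ψ : H, 0 ≤ (inner ℂ ψ (toFun A ψ) : ℂ)
  weak_sigma_additive : ∀ A : ℕ → Set Ω, (∀ i, MeasurableSet (A i)) →
    Pairwise (Function.onFun Disjoint A) → ∀ ψ : H,
    HasSum (fun i => (inner ℂ ψ (toFun (A i) ψ) : ℂ)) (inner ℂ ψ (toFun (⋃ i, A i) ψ))

theorem ContinuousLinearMap.inner_adjoint_comp_comp_self_apply {H K : Type*}
    [NormedAddCommGroup H] [InnerProductSpace ℂ H] [CompleteSpace H]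
    [NormedAddCommGroup K] [InnerProductSpace ℂ K] [CompleteSpace K]
    (T : H →L[ℂ] K) (S : K →L[ℂ] K) (ψ : H) :
    inner ℂ ψ ((T.adjoint ∘L S ∘L T) ψ) = inner ℂ (T ψ) (S (T ψ)) :=
  T.adjoint_inner_right ψ (S (T ψ))

namespace POVM

variable {Ω V H K : Type*} [MeasurableSpace Ω] [MeasurableSpace V]
  [NormedAddCommGroup H] [InnerProductSpace ℂ H] [CompleteSpace H]
  [NormedAddCommGroup K] [InnerProductSpace ℂ K] [CompleteSpace K]

def comap (G : POVM Ω H) (ζ : Ω → V) (hζ : Measurable ζ) : POVM V H where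
  toFun B := G.toFun (ζ ⁻¹' B)
  univ_eq := G.univ_eq
  pos B hB := G.pos _ (hζ hB)
  weak_sigma_additive A hA hdisj ψ := by
    simpa only [Set.preimage_iUnion] using
      G.weak_sigma_additive (fun i => ζ ⁻¹' A i) (fun i => hζ (hA i))
        (fun i j hij => (hdisj hij).preimage ζ) ψ

noncomputable def compress (G : POVM Ω K) (T : H →L[ℂ] K) (hT : T.adjoint ∘L T = 1) :
    POVM Ω H where
  toFun A := T.adjoint ∘L G.toFun A ∘L T
  univ_eq := by rw [G.univ_eq, ContinuousLinearMap.one_def, ContinuousLinearMap.id_comp, hT]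
  pos A hA ψ := by
    rw [ContinuousLinearMap.inner_adjoint_comp_comp_self_apply]
    exact G.pos A hA (T ψ)
  weak_sigma_additive A hA hdisj ψ := by
    simpa only [ContinuousLinearMap.inner_adjoint_comp_comp_self_apply] using
      G.weak_sigma_additive A hA hdisj (T ψ)

theorem inner_compress_toFun (G : POVM Ω K) (T : H →L[ℂ] K) (hT : T.adjoint ∘L T = 1)
    (A : Set Ω) (ψ : H) :
    inner ℂ ψ ((G.compress T hT).toFun A ψ) = inner ℂ (T ψ) (G.toFun A (T ψ)) :=
  T.inner_adjoint_comp_comp_self_apply (G.toFun A) ψ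

end POVM

theorem ContinuousLinearMap.adjoint_comp_self_flip_eq_one {Hs He Ht : Type*}
    [NormedAddCommGroup Hs] [InnerProductSpace ℂ Hs] [CompleteSpace Hs]
    [NormedAddCommGroup He] [InnerProductSpace ℂ He]
    [NormedAddCommGroup Ht] [InnerProductSpace ℂ Ht] [CompleteSpace Ht]
    (tp : Hs →L[ℂ] He →L[ℂ] Ht)
    (htp : ∀ (ψ ψ' : Hs) (χ χ' : He),
        (inner ℂ (tp ψ χ) (tp ψ' χ') : ℂ) = (inner ℂ ψ ψ' : ℂ) * (inner ℂ χ χ' : ℂ))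
    {φ : He} (hφ : ‖φ‖ = 1) :
    (tp.flip φ).adjoint ∘L tp.flip φ = 1 := by
  refine (tp.flip φ).inner_map_map_iff_adjoint_comp_self.mp fun ψ ψ' => ?_
  simp [htp, inner_self_eq_norm_sq_to_K, hφ]

-- `tp ψ χ` models `ψ ⊗ χ`; `tp.flip φ` is then the embedding `ψ ↦ ψ ⊗ φ`, whose adjoint is `L_φ`.
theorem stmt_19_general {Ω V : Type*} [MeasurableSpace Ω] [MeasurableSpace V]
    {Hs He Ht : Type*}
    [NormedAddCommGroup Hs] [InnerProductSpace ℂ Hs] [CompleteSpace Hs]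
    [NormedAddCommGroup He] [InnerProductSpace ℂ He]
    [NormedAddCommGroup Ht] [InnerProductSpace ℂ Ht] [CompleteSpace Ht]
    (tp : Hs →L[ℂ] He →L[ℂ] Ht)
    (htp : ∀ (ψ ψ' : Hs) (χ χ' : He),
        (inner ℂ (tp ψ χ) (tp ψ' χ') : ℂ) = (inner ℂ ψ ψ' : ℂ) * (inner ℂ χ χ' : ℂ))
    (G : POVM Ω Ht) (φ : He) (hφ : ‖φ‖ = 1)
    (ζ : Ω → V) (hζ : Measurable ζ) :
    ∃ E : POVM V Hs, ∀ ψ : Hs, ‖ψ‖ = 1 → ∀ B : Set V, MeasurableSet B →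
      (inner ℂ ψ (E.toFun B ψ) : ℂ)
        = (inner ℂ (tp ψ φ) (G.toFun (ζ ⁻¹' B) (tp ψ φ)) : ℂ) :=
  ⟨(G.comap ζ hζ).compress (tp.flip φ) (tp.adjoint_comp_self_flip_eq_one htp hφ),
    fun ψ _ B _ => POVM.inner_compress_toFun _ _ _ B ψ⟩

/-- Let `ℋ = ℋ_sys ⊗ ℋ_env` (the tensor embedding being given by a continuous bilinear
map `tp` with `⟨tp ψ χ, tp ψ' χ'⟩ = ⟨ψ,ψ'⟩⟨χ,χ'⟩`), `G` a POVM on `(Ω, 𝒜_Ω)` acting on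
`ℋ`, `φ ∈ ℋ_env` a unit vector, and `ζ : Ω → V` measurable. Then there is a POVM `E`
on `(V, 𝒜_V)` acting on `ℋ_sys` such that for every unit vector `ψ ∈ ℋ_sys` the
pushforward under `ζ` of `A ↦ ⟨ψ⊗φ, G(A)(ψ⊗φ)⟩` equals `B ↦ ⟨ψ, E(B)ψ⟩`. -/
theorem stmt_19 {Ω V : Type*} [MeasurableSpace Ω] [MeasurableSpace V]
    {Hs He Ht : Type*}
    [NormedAddCommGroup Hs] [InnerProductSpace ℂ Hs] [CompleteSpace Hs]
    [NormedAddCommGroup He] [InnerProductSpace ℂ He] [CompleteSpace He]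
    [NormedAddCommGroup Ht] [InnerProductSpace ℂ Ht] [CompleteSpace Ht]
    (tp : Hs →L[ℂ] He →L[ℂ] Ht)
    (htp : ∀ (ψ ψ' : Hs) (χ χ' : He),
        (inner ℂ (tp ψ χ) (tp ψ' χ') : ℂ) = (inner ℂ ψ ψ' : ℂ) * (inner ℂ χ χ' : ℂ))
    (G : POVM Ω Ht) (φ : He) (hφ : ‖φ‖ = 1)
    (ζ : Ω → V) (hζ : Measurable ζ) :
    ∃ E : POVM V Hs, ∀ ψ : Hs, ‖ψ‖ = 1 → ∀ B : Set V, MeasurableSet B →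
      (inner ℂ ψ (E.toFun B ψ) : ℂ)
        = (inner ℂ (tp ψ φ) (G.toFun (ζ ⁻¹' B) (tp ψ φ)) : ℂ) :=
  stmt_19_general tp htp G φ hφ ζ hζ
end
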